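/- arXiv:0905.0201 — 2 statements merged into one kernel-verified Lean document; each statement's English description precedes it below -/
import Mathlib

section
/- Conversely, if E_Hmin(|ψ⟩) = 0 for a multipartite pure state |ψ⟩, then |ψ⟩ is a product state: there exist unit vectors |φ_k⟩ ∈ ℂ^{d_k} with |ψ⟩ = e^{iθ} |φ_1⟩ ⊗ ... ⊗ |φ_n⟩ for some phase θ. -/
open scoped BigOperators

/-- Shannon entropy of a finite family of reals (with the convention `0 log 0 = 0`). -/
noncomputable def Hsh {ι : Type*} [Fintype ι] (p : ι → ℝ) : ℝ :=
  ∑ i, Real.negMulLog (p i)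

/-- Measurement entropy of a multipartite pure state: Shannon entropy of the squared
moduli of the computational-basis amplitudes. -/
noncomputable def Hmeas {ι : Type*} [Fintype ι] [DecidableEq ι] {d : ι → ℕ}
    (ψ : (∀ k, Fin (d k)) → ℂ) : ℝ :=
  ∑ i, Real.negMulLog (‖ψ i‖ ^ 2)

/-- Application of a local (one-subsystem-wise) linear transformation
`U_1 ⊗ ... ⊗ U_n` to a multipartite state. -/
noncomputable def applyLocal {ι : Type*} [Fintype ι] [DecidableEq ι] {d : ι → ℕ}
    (U : ∀ k, Matrix (Fin (d k)) (Fin (d k)) ℂ) (ψ : (∀ k, Fin (d k)) → ℂ) :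
    (∀ k, Fin (d k)) → ℂ :=
  fun i => ∑ j, (∏ k, U k (i k) (j k)) * ψ j

/-- `E_Hmin`: the minimum over local unitaries of the measurement entropy. -/
noncomputable def EHmin {ι : Type*} [Fintype ι] [DecidableEq ι] {d : ι → ℕ}
    (ψ : (∀ k, Fin (d k)) → ℂ) : ℝ :=
  ⨅ U : ∀ k, Matrix.unitaryGroup (Fin (d k)) ℂ,
    Hmeas (applyLocal (fun k => (U k : Matrix (Fin (d k)) (Fin (d k)) ℂ)) ψ)

/-!
The function `U ↦ Hmeas (U ψ)` is continuous on the compact group of local unitaries, so the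
infimum `EHmin ψ` is attained at some `U`. Since `U = U_1 ⊗ ... ⊗ U_n` is unitary, `Uψ` is a unit
vector, and its measurement distribution has zero entropy, so `Uψ = c e_{i₀}` with `|c| = 1`.
Then `ψ = c U* e_{i₀}`, and `U* e_{i₀} = ⊗ₖ U_k* e_{i₀ k}` is a product of unit vectors.
-/

open Matrix

lemma Pi.single_one_eq_prod {ι : Type*} [Fintype ι] [DecidableEq ι] {n : ι → Type*}
    [∀ k, DecidableEq (n k)] {R : Type*} [CommMonoidWithZero R] (i₀ : ∀ k, n k) :
    Pi.single i₀ (1 : R) = fun j => ∏ k, (Pi.single (i₀ k) (1 : R) : n k → R) (j k) := by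
  ext j
  simp only [Pi.single_apply, Fintype.prod_boole, funext_iff]

namespace Matrix

variable {ι : Type*} [Fintype ι] {l m n : ι → Type*} {R : Type*}

def piKronecker [CommMonoid R] (A : ∀ k, Matrix (m k) (n k) R) :
    Matrix (∀ k, m k) (∀ k, n k) R :=
  of fun i j => ∏ k, A k (i k) (j k)

lemma piKronecker_mul [DecidableEq ι] [∀ k, Fintype (m k)] [CommSemiring R]
    (A : ∀ k, Matrix (l k) (m k) R) (B : ∀ k, Matrix (m k) (n k) R) :
    piKronecker (fun k => A k * B k) = piKronecker A * piKronecker B := by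
  ext i j
  simp only [piKronecker, of_apply, mul_apply, Finset.prod_univ_sum, Fintype.piFinset_univ,
    Finset.prod_mul_distrib]

lemma piKronecker_one [DecidableEq ι] [∀ k, DecidableEq (n k)] [CommSemiring R] :
    piKronecker (fun k => (1 : Matrix (n k) (n k) R)) = 1 := by
  ext i j
  simp only [piKronecker, of_apply, one_apply, Fintype.prod_boole, funext_iff]

lemma piKronecker_conjTranspose [CommSemiring R] [StarRing R] (A : ∀ k, Matrix (m k) (n k) R) :
    piKronecker (fun k => (A k)ᴴ) = (piKronecker A)ᴴ := by
  ext i j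
  simp only [piKronecker, of_apply, conjTranspose_apply, star_prod]

lemma piKronecker_mem_unitaryGroup [DecidableEq ι] [∀ k, Fintype (n k)] [∀ k, DecidableEq (n k)]
    [CommRing R] [StarRing R] {A : ∀ k, Matrix (n k) (n k) R}
    (hA : ∀ k, A k ∈ unitaryGroup (n k) R) :
    piKronecker A ∈ unitaryGroup (∀ k, n k) R := by
  rw [mem_unitaryGroup_iff, star_eq_conjTranspose, ← piKronecker_conjTranspose,
    ← piKronecker_mul]
  simp_rw [← star_eq_conjTranspose, fun k => mem_unitaryGroup_iff.mp (hA k), piKronecker_one]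

lemma piKronecker_mulVec_prod [DecidableEq ι] [∀ k, Fintype (n k)] [CommSemiring R]
    (A : ∀ k, Matrix (m k) (n k) R) (x : ∀ k, n k → R) :
    piKronecker A *ᵥ (fun j => ∏ k, x k (j k)) = fun i => ∏ k, (A k *ᵥ x k) (i k) := by
  ext i
  simp only [piKronecker, mulVec, dotProduct, of_apply, Finset.prod_univ_sum,
    Fintype.piFinset_univ, Finset.prod_mul_distrib]

lemma eq_smul_prod_of_piKronecker_mulVec_eq_smul_single [DecidableEq ι] [∀ k, Fintype (n k)]
    [∀ k, DecidableEq (n k)] [CommRing R] [StarRing R] {U : ∀ k, Matrix (n k) (n k) R}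
    (hU : ∀ k, U k ∈ unitaryGroup (n k) R) {ψ : (∀ k, n k) → R} {c : R} {i₀ : ∀ k, n k}
    (h : piKronecker U *ᵥ ψ = c • Pi.single i₀ 1) :
    ψ = c • fun i => ∏ k, ((U k)ᴴ *ᵥ Pi.single (i₀ k) 1) (i k) := by
  calc ψ = (piKronecker U)ᴴ *ᵥ (piKronecker U *ᵥ ψ) := by
        rw [mulVec_mulVec, ← star_eq_conjTranspose,
          Unitary.star_mul_self_of_mem (piKronecker_mem_unitaryGroup hU), one_mulVec]
    _ = _ := by
        rw [h, mulVec_smul, ← piKronecker_conjTranspose, Pi.single_one_eq_prod,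
          piKronecker_mulVec_prod]

end Matrix

namespace Matrix

variable {𝕜 n : Type*} [RCLike 𝕜] [Fintype n] [DecidableEq n]

lemma sum_norm_sq_mulVec_of_mem_unitaryGroup {A : Matrix n n 𝕜} (hA : A ∈ unitaryGroup n 𝕜)
    (x : n → 𝕜) : ∑ i, ‖(A *ᵥ x) i‖ ^ 2 = ∑ i, ‖x i‖ ^ 2 := by
  have hA' : toEuclideanCLM (n := n) (𝕜 := 𝕜) A ∈ unitary _ := Unitary.map_mem _ hA
  have := ContinuousLinearMap.norm_map_of_mem_unitary hA' (WithLp.toLp 2 x)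
  rw [toEuclideanCLM_toLp] at this
  rw [← EuclideanSpace.norm_sq_eq (WithLp.toLp 2 (A *ᵥ x)), ← EuclideanSpace.norm_sq_eq, this]

lemma isCompact_unitaryGroup : IsCompact (unitaryGroup n 𝕜 : Set (Matrix n n 𝕜)) :=
  (isCompact_univ_pi fun _ => isCompact_univ_pi fun _ => isCompact_closedBall (0 : 𝕜) 1)
    |>.of_isClosed_subset (isClosed_unitary (R := Matrix n n 𝕜))
    fun _ hU => by simpa using entry_norm_bound_of_unitary hU

instance : CompactSpace (unitaryGroup n 𝕜) :=
  isCompact_iff_compactSpace.mp isCompact_unitaryGroup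

end Matrix

lemma Real.negMulLog_eq_zero_iff {x : ℝ} (hx : 0 ≤ x) :
    Real.negMulLog x = 0 ↔ x = 0 ∨ x = 1 := by
  constructor
  · intro h
    rw [Real.negMulLog, neg_mul, neg_eq_zero, mul_eq_zero, Real.log_eq_zero] at h
    rcases h with h | h | h | h
    all_goals first | exact Or.inl h | exact Or.inr h | linarith
  · rintro (rfl | rfl) <;> simp

lemma exists_eq_single_of_Hsh_eq_zero {ι : Type*} [Fintype ι] [DecidableEq ι] {p : ι → ℝ}
    (h0 : ∀ i, 0 ≤ p i) (hsum : ∑ i, p i = 1) (h : Hsh p = 0) : ∃ i₀, p = Pi.single i₀ 1 := by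
  have h1 : ∀ i, p i ≤ 1 := fun i =>
    hsum ▸ Finset.single_le_sum (fun j _ => h0 j) (Finset.mem_univ i)
  have h01 : ∀ i, p i = 0 ∨ p i = 1 := fun i =>
    (Real.negMulLog_eq_zero_iff (h0 i)).mp <|
      (Finset.sum_eq_zero_iff_of_nonneg fun j _ => Real.negMulLog_nonneg (h0 j) (h1 j)).mp h i
        (Finset.mem_univ i)
  obtain ⟨i₀, -, hi₀⟩ := Finset.exists_ne_zero_of_sum_ne_zero (hsum.trans_ne one_ne_zero)
  have hp₀ : p i₀ = 1 := (h01 i₀).resolve_left hi₀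
  refine ⟨i₀, funext fun i => ?_⟩
  rcases eq_or_ne i i₀ with rfl | hi
  · simp [hp₀]
  · have : p i + p i₀ ≤ 1 := by
      rw [← Finset.sum_pair hi, ← hsum]
      exact Finset.sum_le_sum_of_subset_of_nonneg (Finset.subset_univ _) fun j _ _ => h0 j
    rw [Pi.single_eq_of_ne hi]
    exact (h01 i).resolve_right (by linarith)

section

variable {ι : Type*} [Fintype ι] [DecidableEq ι] {d : ι → ℕ}

lemma applyLocal_eq_piKronecker_mulVec (U : ∀ k, Matrix (Fin (d k)) (Fin (d k)) ℂ)
    (ψ : (∀ k, Fin (d k)) → ℂ) : applyLocal U ψ = piKronecker U *ᵥ ψ :=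
  rfl

lemma Hmeas_eq_Hsh (ψ : (∀ k, Fin (d k)) → ℂ) : Hmeas ψ = Hsh fun i => ‖ψ i‖ ^ 2 :=
  rfl

lemma exists_Hmeas_applyLocal_eq_EHmin (ψ : (∀ k, Fin (d k)) → ℂ) :
    ∃ U : ∀ k, unitaryGroup (Fin (d k)) ℂ,
      Hmeas (applyLocal (fun k => (U k : Matrix (Fin (d k)) (Fin (d k)) ℂ)) ψ) = EHmin ψ := by
  have hcont : Continuous fun U : ∀ k, unitaryGroup (Fin (d k)) ℂ =>
      Hmeas (applyLocal (fun k => (U k : Matrix (Fin (d k)) (Fin (d k)) ℂ)) ψ) := by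
    have : Continuous fun M : ∀ k, Matrix (Fin (d k)) (Fin (d k)) ℂ => Hmeas (applyLocal M ψ) := by
      unfold Hmeas applyLocal
      fun_prop
    exact this.comp (continuous_pi fun k => continuous_subtype_val.comp (continuous_apply k))
  obtain ⟨U, -, hU⟩ := isCompact_univ.exists_isMinOn Set.univ_nonempty hcont.continuousOn
  exact ⟨U, le_antisymm (le_ciInf fun V => hU (Set.mem_univ V))
    (ciInf_le ⟨_, Set.forall_mem_range.mpr fun V => hU (Set.mem_univ V)⟩ U)⟩

end

/-- If `E_Hmin(ψ) = 0` for a multipartite pure state `ψ`, then `ψ` is a product state up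
to a global phase. -/
theorem EHmin_eq_zero_imp_product {ι : Type*} [Fintype ι] [DecidableEq ι] {d : ι → ℕ}
    (ψ : (∀ k, Fin (d k)) → ℂ) (hψ : ∑ i, ‖ψ i‖ ^ 2 = 1)
    (h0 : EHmin ψ = 0) :
    ∃ (θ : ℝ) (φ : ∀ k, Fin (d k) → ℂ),
      (∀ k, ∑ j, ‖φ k j‖ ^ 2 = 1) ∧
      ψ = fun i => Complex.exp (θ * Complex.I) * ∏ k, φ k (i k) := by
  obtain ⟨U, hU⟩ := exists_Hmeas_applyLocal_eq_EHmin ψ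
  have hM := piKronecker_mem_unitaryGroup fun k => (U k).2
  set v := piKronecker (fun k => (U k : Matrix (Fin (d k)) (Fin (d k)) ℂ)) *ᵥ ψ
  rw [applyLocal_eq_piKronecker_mulVec, Hmeas_eq_Hsh, h0] at hU
  obtain ⟨i₀, hi₀⟩ := exists_eq_single_of_Hsh_eq_zero (fun i => sq_nonneg ‖v i‖)
    ((sum_norm_sq_mulVec_of_mem_unitaryGroup hM ψ).trans hψ) hU
  have hv : v = v i₀ • Pi.single i₀ 1 := by
    ext i
    rcases eq_or_ne i i₀ with rfl | hi
    · simp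
    · simpa [hi] using congrFun hi₀ i
  have hphase : Complex.exp (Complex.arg (v i₀) * Complex.I) = v i₀ := by
    have hc : ‖v i₀‖ = 1 := (pow_eq_one_iff_of_nonneg (norm_nonneg _) two_ne_zero).mp
      ((congrFun hi₀ i₀).trans (Pi.single_eq_same _ _))
    simpa [hc] using Complex.norm_mul_exp_arg_mul_I (v i₀)
  refine ⟨Complex.arg (v i₀), fun k => (U k : Matrix _ _ ℂ)ᴴ *ᵥ Pi.single (i₀ k) 1,
    fun k => ?_, ?_⟩
  · exact (sum_norm_sq_mulVec_of_mem_unitaryGroup (Unitary.star_mem (U k).2) _).trans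
      (by simp [Pi.single_apply, apply_ite])
  · rw [hphase]
    exact eq_smul_prod_of_piKronecker_mulVec_eq_smul_single (fun k => (U k).2) hv
end

section
/- Monotonicity of E_Hmin under orthogonal measurements: if measuring the first qudit of an n-qudit pure state |ψ⟩ in some orthonormal basis yields outcomes |ψ_j⟩ = |φ_j^1⟩ ⊗ |φ_j^{rest}⟩ with probabilities p_j, then E_Hmin(|ψ⟩) ≥ ∑_j p_j E_Hmin(|ψ_j⟩). -/
open scoped BigOperators

/-!
For a local unitary `U = U₀ ⊗ V`, the vectors `U₀ φⱼ` are again orthonormal, so in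
`Uψ = ∑ⱼ cⱼ (U₀ φⱼ) ⊗ (V ψrestⱼ)` the probability that the last `n` qudits read `r` is
`∑ⱼ pⱼ |(V ψrestⱼ) r|²`. Subadditivity of `x ↦ -x log x` bounds `Hmeas (Uψ)` below by the
entropy of this marginal, and its concavity bounds that below by `∑ⱼ pⱼ Hmeas (V ψrestⱼ)`, hence
by `∑ⱼ pⱼ EHmin ψrestⱼ`. Finally `EHmin (φⱼ ⊗ ψrestⱼ) ≤ EHmin ψrestⱼ`: the conjugate of the
matrix with rows `φⱼ` is unitary and sends `φⱼ` to a basis vector, which contributes no entropy.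
-/

open Matrix

section UnitaryMatrix

variable {m β : Type*} [Fintype m] [DecidableEq β]

theorem Matrix.star_dotProduct_self_eq_sum_norm_sq (v : m → ℂ) :
    star v ⬝ᵥ v = ((∑ i, ‖v i‖ ^ 2 : ℝ) : ℂ) := by
  simp [dotProduct, Complex.conj_mul']

theorem Matrix.sum_norm_sq_mulVec_of_conjTranspose_mul_self [Fintype β] {W : Matrix m β ℂ}
    (hW : Wᴴ * W = 1) (v : β → ℂ) : ∑ i, ‖(W *ᵥ v) i‖ ^ 2 = ∑ j, ‖v j‖ ^ 2 := by
  apply Complex.ofReal_injective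
  rw [← star_dotProduct_self_eq_sum_norm_sq, ← star_dotProduct_self_eq_sum_norm_sq, star_mulVec,
    ← dotProduct_mulVec, mulVec_mulVec, hW, one_mulVec]

theorem Matrix.sum_norm_sq_vecMul_of_mul_conjTranspose_self [Fintype β] {X : Matrix β m ℂ}
    (hX : X * Xᴴ = 1) (a : β → ℂ) : ∑ x, ‖(a ᵥ* X) x‖ ^ 2 = ∑ j, ‖a j‖ ^ 2 := by
  rw [← mulVec_transpose]
  refine sum_norm_sq_mulVec_of_conjTranspose_mul_self ?_ a
  rw [conjTranspose_transpose_eq_transpose_conjTranspose, ← transpose_mul, hX, transpose_one]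

variable [DecidableEq m]

theorem Matrix.map_star_mulVec_row {Φ : Matrix m m ℂ} (hΦ : Φ ∈ unitaryGroup m ℂ) (j : m) :
    Φ.map star *ᵥ Φ j = Pi.single j 1 := by
  ext x
  have hrows := congrFun (congrFun (mem_unitaryGroup_iff.mp hΦ) j) x
  simp only [mul_apply, star_apply, one_apply] at hrows
  simp only [mulVec, dotProduct, map_apply, Pi.single_apply, eq_comm (a := x), ← hrows, mul_comm]

theorem Matrix.mulVec_rows_mul_conjTranspose_self {X : Matrix β m ℂ} (hX : X * Xᴴ = 1)
    {W : Matrix m m ℂ} (hW : W ∈ unitaryGroup m ℂ) :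
    (Matrix.of fun j => W *ᵥ X j) * (Matrix.of fun j => W *ᵥ X j)ᴴ = 1 := by
  have hXW : (Matrix.of fun j => W *ᵥ X j) = X * Wᵀ := by
    ext j x
    simp [mulVec, dotProduct, mul_apply, mul_comm]
  have hWt : Wᵀ * Wᵀᴴ = 1 :=
    mem_unitaryGroup_iff.mp (transpose_mem_unitaryGroup_iff.mpr hW)
  rw [hXW, conjTranspose_mul, Matrix.mul_assoc, ← Matrix.mul_assoc Wᵀ, hWt, Matrix.one_mul, hX]

end UnitaryMatrix

theorem Real.negMulLog_sum_le_sum_negMulLog {α : Type*} {s : Finset α} {f : α → ℝ}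
    (hf : ∀ i ∈ s, 0 ≤ f i) : Real.negMulLog (∑ i ∈ s, f i) ≤ ∑ i ∈ s, Real.negMulLog (f i) := by
  simp only [Real.negMulLog, neg_mul, Finset.sum_mul, ← Finset.sum_neg_distrib]
  refine Finset.sum_le_sum fun i hi => neg_le_neg ?_
  rcases (hf i hi).eq_or_lt with h | h
  · simp [← h]
  · exact mul_le_mul_of_nonneg_left
      (Real.log_le_log h (Finset.single_le_sum hf hi)) (hf i hi)

section LocalUnitaries

variable {ι : Type*} [Fintype ι] [DecidableEq ι] {d : ι → ℕ}

theorem negMulLog_sum_norm_sq_le_Hmeas (ψ : (∀ k, Fin (d k)) → ℂ) :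
    Real.negMulLog (∑ i, ‖ψ i‖ ^ 2) ≤ Hmeas ψ :=
  Real.negMulLog_sum_le_sum_negMulLog fun _ _ => by positivity

def localMatrix (U : ∀ k, Matrix (Fin (d k)) (Fin (d k)) ℂ) :
    Matrix (∀ k, Fin (d k)) (∀ k, Fin (d k)) ℂ :=
  Matrix.of fun i j => ∏ k, U k (i k) (j k)

theorem applyLocal_eq_mulVec (U : ∀ k, Matrix (Fin (d k)) (Fin (d k)) ℂ)
    (ψ : (∀ k, Fin (d k)) → ℂ) : applyLocal U ψ = localMatrix U *ᵥ ψ :=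
  rfl

theorem localMatrix_mem_unitaryGroup {U : ∀ k, Matrix (Fin (d k)) (Fin (d k)) ℂ}
    (hU : ∀ k, U k ∈ unitaryGroup (Fin (d k)) ℂ) :
    localMatrix U ∈ unitaryGroup (∀ k, Fin (d k)) ℂ := by
  rw [mem_unitaryGroup_iff']
  ext j j'
  have hcol : ∀ k, ∑ x, star (U k x (j k)) * U k x (j' k) = if j k = j' k then 1 else 0 :=
    fun k => by
      simpa [mul_apply, one_apply] using
        congrFun (congrFun ((mem_unitaryGroup_iff').mp (hU k)) (j k)) (j' k)
  simp only [mul_apply, star_apply, localMatrix, of_apply, star_prod, ← Finset.prod_mul_distrib]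
  rw [← Fintype.prod_sum (fun k x => star (U k x (j k)) * U k x (j' k))]
  simp only [hcol, Fintype.prod_boole, one_apply, funext_iff]

theorem sum_norm_sq_applyLocal (U : ∀ k, unitaryGroup (Fin (d k)) ℂ)
    (ψ : (∀ k, Fin (d k)) → ℂ) :
    ∑ i, ‖applyLocal (fun k => (U k : Matrix (Fin (d k)) (Fin (d k)) ℂ)) ψ i‖ ^ 2 =
      ∑ i, ‖ψ i‖ ^ 2 :=
  sum_norm_sq_mulVec_of_conjTranspose_mul_self
    ((mem_unitaryGroup_iff').mp (localMatrix_mem_unitaryGroup fun k => (U k).2)) ψ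

theorem EHmin_le_Hmeas_applyLocal (ψ : (∀ k, Fin (d k)) → ℂ)
    (U : ∀ k, unitaryGroup (Fin (d k)) ℂ) :
    EHmin ψ ≤ Hmeas (applyLocal (fun k => (U k : Matrix (Fin (d k)) (Fin (d k)) ℂ)) ψ) := by
  refine ciInf_le ⟨Real.negMulLog (∑ i, ‖ψ i‖ ^ 2), ?_⟩ U
  rintro _ ⟨V, rfl⟩
  rw [← sum_norm_sq_applyLocal V ψ]
  exact negMulLog_sum_norm_sq_le_Hmeas _

end LocalUnitaries

section FirstQudit

variable {n : ℕ} {d : Fin (n + 1) → ℕ}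

def tensorCons (f : Fin (d 0) → ℂ) (g : (∀ k : Fin n, Fin (d k.succ)) → ℂ) :
    (∀ k, Fin (d k)) → ℂ :=
  fun i => f (i 0) * g (Fin.tail i)

theorem sum_pi_fin_succ {M : Type*} [AddCommMonoid M] {α : Fin (n + 1) → Type*}
    [∀ k, Fintype (α k)] (F : (∀ k, α k) → M) :
    ∑ i, F i = ∑ x, ∑ r, F (Fin.cons x r) := by
  rw [← (Fin.consEquiv α).sum_comp, Fintype.sum_prod_type]
  rfl

theorem applyLocal_tensorCons (U : ∀ k, Matrix (Fin (d k)) (Fin (d k)) ℂ) (f : Fin (d 0) → ℂ)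
    (g : (∀ k : Fin n, Fin (d k.succ)) → ℂ) :
    applyLocal U (tensorCons f g) =
      tensorCons (U 0 *ᵥ f) (applyLocal (fun k => U k.succ) g) := by
  funext i
  simp only [applyLocal, tensorCons, mulVec, dotProduct, Finset.sum_mul_sum]
  rw [sum_pi_fin_succ]
  refine Finset.sum_congr rfl fun x _ => Finset.sum_congr rfl fun r _ => ?_
  simp only [Fin.prod_univ_succ, Fin.cons_zero, Fin.cons_succ, Fin.tail_cons, Fin.tail]
  ring

theorem applyLocal_sum_smul_tensorCons {β : Type*} [Fintype β]
    (U : ∀ k, Matrix (Fin (d k)) (Fin (d k)) ℂ) (c : β → ℂ) (f : β → Fin (d 0) → ℂ)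
    (g : β → (∀ k : Fin n, Fin (d k.succ)) → ℂ) :
    applyLocal U (∑ j, c j • tensorCons (f j) (g j)) =
      ∑ j, c j • tensorCons (U 0 *ᵥ f j) (applyLocal (fun k => U k.succ) (g j)) := by
  rw [applyLocal_eq_mulVec, mulVec_sum]
  simp only [mulVec_smul, ← applyLocal_eq_mulVec, applyLocal_tensorCons]

theorem Hmeas_tensorCons_single (j : Fin (d 0)) (g : (∀ k : Fin n, Fin (d k.succ)) → ℂ) :
    Hmeas (tensorCons (Pi.single j 1) g) = Hmeas g := by
  rw [Hmeas, sum_pi_fin_succ, Finset.sum_eq_single j]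
  · simp [tensorCons, Hmeas]
  · intro x _ hx
    simp [tensorCons, hx]
  · simp

theorem EHmin_tensorCons_le {W : Matrix (Fin (d 0)) (Fin (d 0)) ℂ}
    (hW : W ∈ unitaryGroup (Fin (d 0)) ℂ) {f : Fin (d 0) → ℂ} {j : Fin (d 0)}
    (hf : W *ᵥ f = Pi.single j 1) (g : (∀ k : Fin n, Fin (d k.succ)) → ℂ) :
    EHmin (tensorCons f g) ≤ EHmin g := by
  refine le_ciInf fun V => ?_
  refine (EHmin_le_Hmeas_applyLocal _ (Fin.cons ⟨W, hW⟩ V)).trans_eq ?_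
  rw [applyLocal_tensorCons]
  simp only [Fin.cons_zero, Fin.cons_succ, hf, Hmeas_tensorCons_single]

end FirstQudit

section Superposition

variable {n : ℕ} {d : Fin (n + 1) → ℕ} {β : Type*} [Fintype β] [DecidableEq β]

theorem sum_norm_sq_sum_smul_tensorCons_cons {X : Matrix β (Fin (d 0)) ℂ} (hX : X * Xᴴ = 1)
    (c : β → ℂ) (g : β → (∀ k : Fin n, Fin (d k.succ)) → ℂ) (r : ∀ k : Fin n, Fin (d k.succ)) :
    ∑ x, ‖(∑ j, c j • tensorCons (X j) (g j)) (Fin.cons x r)‖ ^ 2 =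
      ∑ j, ‖c j‖ ^ 2 * ‖g j r‖ ^ 2 := by
  have hrow : ∀ x, (∑ j, c j • tensorCons (X j) (g j)) (Fin.cons x r) =
      ((fun j => c j * g j r) ᵥ* X) x := fun x => by
    simp only [Finset.sum_apply, Pi.smul_apply, smul_eq_mul, tensorCons, Fin.cons_zero,
      Fin.tail_cons, vecMul, dotProduct]
    exact Finset.sum_congr rfl fun j _ => by ring
  simp only [hrow, sum_norm_sq_vecMul_of_mul_conjTranspose_self hX, norm_mul, mul_pow]

theorem sum_mul_Hmeas_le_Hmeas_sum_smul_tensorCons {X : Matrix β (Fin (d 0)) ℂ}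
    (hX : X * Xᴴ = 1) {c : β → ℂ} (hc : ∑ j, ‖c j‖ ^ 2 = 1)
    (g : β → (∀ k : Fin n, Fin (d k.succ)) → ℂ) :
    ∑ j, ‖c j‖ ^ 2 * Hmeas (g j) ≤ Hmeas (∑ j, c j • tensorCons (X j) (g j)) := by
  set F := ∑ j, c j • tensorCons (X j) (g j)
  calc ∑ j, ‖c j‖ ^ 2 * Hmeas (g j)
      = ∑ r, ∑ j, ‖c j‖ ^ 2 * Real.negMulLog (‖g j r‖ ^ 2) := by
        simp only [Hmeas, Finset.mul_sum]
        exact Finset.sum_comm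
    _ ≤ ∑ r, Real.negMulLog (∑ j, ‖c j‖ ^ 2 * ‖g j r‖ ^ 2) := by
        refine Finset.sum_le_sum fun r _ => ?_
        simpa using Real.concaveOn_negMulLog.le_map_sum (t := Finset.univ)
          (fun j _ => by positivity) hc (fun j _ => Set.mem_Ici.mpr (by positivity))
    _ = ∑ r, Real.negMulLog (∑ x, ‖F (Fin.cons x r)‖ ^ 2) := by
        simp only [F, sum_norm_sq_sum_smul_tensorCons_cons hX]
    _ ≤ ∑ r, ∑ x, Real.negMulLog (‖F (Fin.cons x r)‖ ^ 2) :=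
        Finset.sum_le_sum fun r _ =>
          Real.negMulLog_sum_le_sum_negMulLog fun _ _ => by positivity
    _ = Hmeas F := by
        rw [Hmeas, sum_pi_fin_succ, Finset.sum_comm]

theorem sum_mul_EHmin_le_EHmin_sum_smul_tensorCons {X : Matrix β (Fin (d 0)) ℂ}
    (hX : X * Xᴴ = 1) {c : β → ℂ} (hc : ∑ j, ‖c j‖ ^ 2 = 1)
    (g : β → (∀ k : Fin n, Fin (d k.succ)) → ℂ) :
    ∑ j, ‖c j‖ ^ 2 * EHmin (g j) ≤ EHmin (∑ j, c j • tensorCons (X j) (g j)) := by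
  refine le_ciInf fun U => ?_
  calc ∑ j, ‖c j‖ ^ 2 * EHmin (g j)
      ≤ ∑ j, ‖c j‖ ^ 2 * Hmeas (applyLocal (fun k => (U k.succ : Matrix _ _ ℂ)) (g j)) :=
        Finset.sum_le_sum fun j _ => mul_le_mul_of_nonneg_left
          (EHmin_le_Hmeas_applyLocal (g j) fun k => U k.succ) (by positivity)
    _ ≤ _ := by
        have h := sum_mul_Hmeas_le_Hmeas_sum_smul_tensorCons
          (mulVec_rows_mul_conjTranspose_self hX (U 0).2) hc
          fun j => applyLocal (fun k => (U k.succ : Matrix _ _ ℂ)) (g j)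
        rwa [applyLocal_sum_smul_tensorCons _ c X g]

end Superposition

/-- Monotonicity of `E_Hmin` under orthogonal measurements of the first qudit:
if measuring the first qudit of `|ψ⟩` in an orthonormal basis `{φ_j}` yields
post-measurement states `|φ_j⟩ ⊗ |ψrest_j⟩` with probabilities `p_j = |c_j|²`, then
`E_Hmin(ψ) ≥ ∑_j p_j E_Hmin(φ_j ⊗ ψrest_j)`. -/
theorem EHmin_monotone_measurement (n d : ℕ)
    (ψ : (Fin (n + 1) → Fin d) → ℂ) (hψ : ∑ i, ‖ψ i‖ ^ 2 = 1)
    (φ : Fin d → Fin d → ℂ)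
    (hφ : ∀ j j', ∑ x, φ j x * (starRingEnd ℂ) (φ j' x) = if j = j' then 1 else 0)
    (c : Fin d → ℂ) (ψrest : Fin d → (Fin n → Fin d) → ℂ)
    (hrest : ∀ j, ∑ r, ‖ψrest j r‖ ^ 2 = 1)
    (hdec : ∀ i, ψ i = ∑ j, c j * φ j (i 0) * ψrest j (fun k => i k.succ)) :
    ∑ j, ‖c j‖ ^ 2 *
        EHmin (d := fun _ : Fin (n + 1) => d)
          (fun i => φ j (i 0) * ψrest j (fun k => i k.succ)) ≤
      EHmin ψ := by
  have hΦ : Matrix.of φ * (Matrix.of φ)ᴴ = 1 := by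
    ext j j'
    simpa [mul_apply, one_apply] using hφ j j'
  have hΦ_unitary : Matrix.of φ ∈ unitaryGroup (Fin d) ℂ := mem_unitaryGroup_iff.mpr hΦ
  have hψ_dec :
      ψ = ∑ j, c j • tensorCons (d := fun _ => d) (Matrix.of φ j) (ψrest j) := by
    funext i
    rw [hdec]
    simp only [Finset.sum_apply, Pi.smul_apply, smul_eq_mul, tensorCons, mul_assoc]
    rfl
  have hc : ∑ j, ‖c j‖ ^ 2 = 1 := by
    rw [← hψ, sum_pi_fin_succ, Finset.sum_comm, hψ_dec]
    simp only [sum_norm_sq_sum_smul_tensorCons_cons (d := fun _ => d) hΦ]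
    rw [Finset.sum_comm]
    simp only [← Finset.mul_sum, hrest, mul_one]
  calc _ ≤ ∑ j, ‖c j‖ ^ 2 * EHmin (ψrest j) :=
        Finset.sum_le_sum fun j _ => mul_le_mul_of_nonneg_left
          (EHmin_tensorCons_le (d := fun _ => d) (map_star_mem_unitaryGroup_iff.mpr hΦ_unitary)
            (map_star_mulVec_row hΦ_unitary j) _) (by positivity)
    _ ≤ EHmin ψ := by
        rw [hψ_dec]
        exact sum_mul_EHmin_le_EHmin_sum_smul_tensorCons (d := fun _ => d) hΦ hc ψrest
end
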